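/- arXiv:1310.2168 — 2 statements merged into one kernel-verified Lean document; each statement's English description precedes it below -/
import Mathlib

section
/- Let n ≥ 2, let a, b ∈ SU(n) and ζ ∈ ℂ with a b a⁻¹ b⁻¹ = ζ·I. If the centralizer of {a,b} in SU(n) equals the center of SU(n) (i.e. every element of SU(n) commuting with a and b is a scalar matrix ω·I with ωⁿ = 1), then ζ is a primitive n-th root of unity. -/
/-!
Comparing determinants in `a b = ζ b a` gives `ζ ^ n = 1`; let `d` be the order of `ζ`. Then
`b ^ d` commutes with `a` and `b`, so it is scalar. For an eigenvector `v` of `a`, each `b ^ k v`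
is again an eigenvector of `a`, so the span of the `b ^ k v` is a nonzero subspace of dimension at
most `d` invariant under `a` and `b`. The reflection in this subspace is a unitary commuting with
`a` and `b`; a unit multiple of it lies in `SU(n)`, so irreducibility forces it to be scalar. Hence
the subspace is the whole space and `d = n`.
-/

open Module End Matrix

theorem mul_pow_eq_smul_pow_mul {K A : Type*} [CommSemiring K] [Semiring A] [Algebra K A]
    {a b : A} {ζ : K} (h : a * b = ζ • (b * a)) (k : ℕ) : a * b ^ k = ζ ^ k • (b ^ k * a) := by
  induction k with
  | zero => simp
  | succ k ih =>
    rw [pow_succ, ← mul_assoc, ih, smul_mul_assoc, mul_assoc, h, mul_smul_comm, smul_smul,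
      ← mul_assoc, pow_succ]

theorem Matrix.pow_card_eq_one_of_mul_eq_smul {n K : Type*} [Fintype n] [DecidableEq n]
    [CommRing K] [IsDomain K] {A B : Matrix n n K} {ζ : K} (h : A * B = ζ • (B * A))
    (hdet : (A * B).det ≠ 0) : ζ ^ Fintype.card n = 1 := by
  have hdet_eq := congrArg det h
  rw [det_smul, det_mul B, mul_comm B.det, ← det_mul] at hdet_eq
  exact (mul_eq_right₀ hdet).mp hdet_eq.symm

theorem Matrix.UnitaryGroup.mul_eq_smul_mul_of_commutator_eq_smul {n α : Type*} [Fintype n]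
    [DecidableEq n] [CommRing α] [StarRing α] {a b : unitaryGroup n α} {ζ : α}
    (h : ((a * b * a⁻¹ * b⁻¹ : unitaryGroup n α) : Matrix n n α) = ζ • 1) :
    (a : Matrix n n α) * b = ζ • (b * a) := by
  have hab : a * b = a * b * a⁻¹ * b⁻¹ * (b * a) := by group
  rw [← Submonoid.coe_mul, hab, Submonoid.coe_mul, h, smul_mul_assoc, one_mul]
  rfl

theorem Matrix.exists_smul_mem_specialUnitaryGroup {n : Type*} [Fintype n] [DecidableEq n]
    [Nonempty n] {U : Matrix n n ℂ} (hU : U ∈ unitaryGroup n ℂ) :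
    ∃ γ : ℂ, γ ≠ 0 ∧ γ • U ∈ specialUnitaryGroup n ℂ := by
  have hdet : U.det ∈ unitary ℂ := det_of_mem_unitary hU
  obtain ⟨γ, hγ⟩ := IsAlgClosed.exists_pow_nat_eq (star U.det) (Fintype.card_pos (α := n))
  have hγnorm : ‖γ‖ = 1 := by
    refine (pow_eq_one_iff_of_nonneg (norm_nonneg γ) (Fintype.card_ne_zero (α := n))).mp ?_
    rw [← norm_pow, hγ, norm_star, CStarRing.norm_of_mem_unitary hdet]
  have hγu : γ ∈ unitary ℂ := by
    rw [Unitary.mem_iff_star_mul_self, RCLike.star_def, RCLike.conj_mul, hγnorm]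
    simp
  refine ⟨γ, fun h => by simp [h] at hγnorm,
    mem_specialUnitaryGroup_iff.mpr ⟨Unitary.smul_mem_of_mem hγu hU, ?_⟩⟩
  rw [det_smul, hγ, Unitary.star_mul_self_of_mem hdet]

section CyclicSpan

variable {K V : Type*} [Field K] [AddCommGroup V] [Module K V]

theorem span_range_pow_apply_mem_invtSubmodule (g : End K V) (v : V) :
    Submodule.span K (Set.range fun k : ℕ => (g ^ k) v) ∈ g.invtSubmodule := by
  rw [mem_invtSubmodule_iff_map_le, Submodule.map_span, Submodule.span_le]
  rintro _ ⟨_, ⟨k, rfl⟩, rfl⟩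
  exact Submodule.subset_span ⟨k + 1, by simp only [pow_succ', End.mul_apply]⟩

theorem span_range_pow_apply_mem_invtSubmodule_of_mul_eq_smul {f g : End K V} {ζ μ : K}
    (hfg : f * g = ζ • (g * f)) {v : V} (hv : f v = μ • v) :
    Submodule.span K (Set.range fun k : ℕ => (g ^ k) v) ∈ f.invtSubmodule := by
  rw [mem_invtSubmodule_iff_map_le, Submodule.map_span, Submodule.span_le]
  rintro _ ⟨_, ⟨k, rfl⟩, rfl⟩
  have heigen : f ((g ^ k) v) = (ζ ^ k * μ) • (g ^ k) v := by
    rw [← End.mul_apply, mul_pow_eq_smul_pow_mul hfg, LinearMap.smul_apply, End.mul_apply, hv,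
      map_smul, smul_smul]
  rw [SetLike.mem_coe, heigen]
  exact Submodule.smul_mem _ _ (Submodule.subset_span ⟨k, rfl⟩)

theorem finrank_span_range_pow_apply_le {g : End K V} {d : ℕ} (hd : 0 < d) {c : K}
    (hg : g ^ d = c • 1) (v : V) :
    finrank K (Submodule.span K (Set.range fun k : ℕ => (g ^ k) v)) ≤ d := by
  have hle : Submodule.span K (Set.range fun k : ℕ => (g ^ k) v) ≤
      Submodule.span K (Set.range fun i : Fin d => (g ^ (i : ℕ)) v) := by
    rw [Submodule.span_le]
    rintro _ ⟨k, rfl⟩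
    have hpow : (g ^ k) v = c ^ (k / d) • (g ^ (k % d)) v := calc
      (g ^ k) v = (g ^ (k % d) * (g ^ d) ^ (k / d)) v := by
        rw [← pow_mul, ← pow_add, Nat.mod_add_div]
      _ = c ^ (k / d) • (g ^ (k % d)) v := by
        rw [hg, smul_pow, one_pow, mul_smul_comm, mul_one, LinearMap.smul_apply]
    simp only [SetLike.mem_coe, hpow]
    exact Submodule.smul_mem _ _ (Submodule.subset_span ⟨⟨k % d, Nat.mod_lt k hd⟩, rfl⟩)
  have := FiniteDimensional.span_of_finite K (Set.finite_range fun i : Fin d => (g ^ (i : ℕ)) v)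
  exact (Submodule.finrank_mono hle).trans ((finrank_range_le_card _).trans (Fintype.card_fin d).le)

theorem exists_invtSubmodule_ne_bot_finrank_le [IsAlgClosed K] [FiniteDimensional K V]
    [Nontrivial V] {f g : End K V} {ζ c : K} (hfg : f * g = ζ • (g * f)) {d : ℕ} (hd : 0 < d)
    (hg : g ^ d = c • 1) :
    ∃ W : Submodule K V, W ≠ ⊥ ∧ W ∈ f.invtSubmodule ∧ W ∈ g.invtSubmodule ∧
      finrank K W ≤ d := by
  obtain ⟨μ, hμ⟩ := f.exists_eigenvalue
  obtain ⟨v, hv⟩ := hμ.exists_hasEigenvector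
  refine ⟨Submodule.span K (Set.range fun k : ℕ => (g ^ k) v),
    (Submodule.ne_bot_iff _).mpr ⟨v, Submodule.subset_span ⟨0, rfl⟩, hv.2⟩,
    span_range_pow_apply_mem_invtSubmodule_of_mul_eq_smul hfg hv.apply_eq_smul,
    span_range_pow_apply_mem_invtSubmodule g v, finrank_span_range_pow_apply_le hd hg v⟩

end CyclicSpan

namespace Submodule

variable {𝕜 : Type*} [RCLike 𝕜]

theorem commute_reflection_of_mem_invtSubmodule {E : Type*} [NormedAddCommGroup E]
    [InnerProductSpace 𝕜 E] [FiniteDimensional 𝕜 E] {W : Submodule 𝕜 E} {e : E ≃ₗᵢ[𝕜] E}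
    (hW : W ∈ invtSubmodule (e : E →ₗ[𝕜] E)) : Commute W.reflection e := by
  have hmap : W.map (e.toLinearEquiv : E →ₗ[𝕜] E) = W :=
    eq_of_le_of_finrank_eq ((mem_invtSubmodule_iff_map_le _).mp hW)
      (LinearEquiv.finrank_map_eq _ _)
  have hconj := reflection_map_apply e W
  simp only [hmap] at hconj
  ext x
  simpa using hconj (e x)

variable {n : Type*} [Fintype n] [DecidableEq n]

noncomputable def reflectionMatrix (W : Submodule 𝕜 (EuclideanSpace 𝕜 n)) : Matrix n n 𝕜 :=
  (toEuclideanCLM (n := n) (𝕜 := 𝕜)).symm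
    (W.reflection : EuclideanSpace 𝕜 n →L[𝕜] EuclideanSpace 𝕜 n)

theorem reflectionMatrix_mem_unitaryGroup (W : Submodule 𝕜 (EuclideanSpace 𝕜 n)) :
    W.reflectionMatrix ∈ unitaryGroup n 𝕜 :=
  Unitary.map_mem (toEuclideanCLM (n := n) (𝕜 := 𝕜)).symm
    (Unitary.linearIsometryEquiv.symm W.reflection).prop

theorem commute_reflectionMatrix {W : Submodule 𝕜 (EuclideanSpace 𝕜 n)} {A : Matrix n n 𝕜}
    (hA : A ∈ unitaryGroup n 𝕜)
    (hW : W ∈ invtSubmodule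
      (toEuclideanCLM (n := n) (𝕜 := 𝕜) A : EuclideanSpace 𝕜 n →ₗ[𝕜] EuclideanSpace 𝕜 n)) :
    Commute W.reflectionMatrix A := by
  let e := Unitary.linearIsometryEquiv ⟨toEuclideanCLM (n := n) (𝕜 := 𝕜) A, Unitary.map_mem _ hA⟩
  have hcomm := commute_reflection_of_mem_invtSubmodule (e := e) hW
  have hcomm' : Commute (W.reflection : EuclideanSpace 𝕜 n →L[𝕜] EuclideanSpace 𝕜 n)
      (toEuclideanCLM (n := n) (𝕜 := 𝕜) A) :=
    ContinuousLinearMap.ext fun x => DFunLike.congr_fun hcomm x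
  simpa [reflectionMatrix] using hcomm'.map (toEuclideanCLM (n := n) (𝕜 := 𝕜)).symm

theorem eq_bot_or_eq_top_of_reflectionMatrix_eq_smul {W : Submodule 𝕜 (EuclideanSpace 𝕜 n)}
    {c : 𝕜} (h : W.reflectionMatrix = c • 1) : W = ⊥ ∨ W = ⊤ := by
  have hrefl : ∀ x, W.reflection x = c • x := fun x => by
    simpa [reflectionMatrix] using
      DFunLike.congr_fun (congrArg (toEuclideanCLM (n := n) (𝕜 := 𝕜)) h) x
  refine or_iff_not_imp_left.mpr fun hW => ?_
  obtain ⟨v, hv, hv0⟩ := W.ne_bot_iff.mp hW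
  have hc : c = 1 := smul_left_injective 𝕜 hv0 <| by
    simp [← hrefl, reflection_mem_subspace_eq_self hv]
  exact eq_top_iff.mpr fun x _ => (reflection_eq_self_iff x).mp (by simp [hrefl, hc])

end Submodule

theorem irreducible_pair_commutator_primitive_SU_general
    (n : ℕ) (hn : 2 ≤ n) (ζ : ℂ)
    (a b : Matrix.unitaryGroup (Fin n) ℂ)
    (hab : ((a * b * a⁻¹ * b⁻¹ : Matrix.unitaryGroup (Fin n) ℂ) : Matrix (Fin n) (Fin n) ℂ)
        = ζ • (1 : Matrix (Fin n) (Fin n) ℂ))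
    (hirr : ∀ g : Matrix.unitaryGroup (Fin n) ℂ,
        Matrix.det (g : Matrix (Fin n) (Fin n) ℂ) = 1 →
        g * a = a * g → g * b = b * g →
        ∃ ω : ℂ, ω ^ n = 1 ∧
          (g : Matrix (Fin n) (Fin n) ℂ) = ω • (1 : Matrix (Fin n) (Fin n) ℂ)) :
    IsPrimitiveRoot ζ n := by
  have : NeZero n := ⟨by omega⟩
  have hscalar : ∀ g ∈ unitaryGroup (Fin n) ℂ, Commute g a → Commute g b →
      ∃ ω : ℂ, g = ω • 1 := by
    intro g hg hga hgb
    obtain ⟨γ, hγ, hγg⟩ := exists_smul_mem_specialUnitaryGroup hg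
    obtain ⟨ω, -, hω⟩ := hirr ⟨γ • g, hγg.1⟩ hγg.2 (Subtype.ext (hga.smul_left γ).eq)
      (Subtype.ext (hgb.smul_left γ).eq)
    exact ⟨γ⁻¹ * ω, by rw [mul_smul, ← hω, inv_smul_smul₀ hγ]⟩
  have hcomm := UnitaryGroup.mul_eq_smul_mul_of_commutator_eq_smul hab
  have hζ : ζ ^ n = 1 := by
    simpa using pow_card_eq_one_of_mul_eq_smul hcomm (UnitaryGroup.det_isUnit (a * b)).ne_zero
  have hd : 0 < orderOf ζ := (isOfFinOrder_iff_pow_eq_one.mpr ⟨n, by omega, hζ⟩).orderOf_pos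
  obtain ⟨ω, hω⟩ := hscalar _ (pow_mem b.prop (orderOf ζ))
    (by rw [Commute, SemiconjBy, mul_pow_eq_smul_pow_mul hcomm, pow_orderOf_eq_one, one_smul])
    ((Commute.refl _).pow_left _)
  let φ : Matrix (Fin n) (Fin n) ℂ → Module.End ℂ (EuclideanSpace ℂ (Fin n)) :=
    fun M => toEuclideanCLM (n := Fin n) (𝕜 := ℂ) M
  obtain ⟨W, hW0, hWa, hWb, hWd⟩ := exists_invtSubmodule_ne_bot_finrank_le (f := φ a) (g := φ b)
    (by simpa [φ] using congrArg φ hcomm) hd (by simpa [φ] using congrArg φ hω)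
  obtain ⟨c, hc⟩ := hscalar _ W.reflectionMatrix_mem_unitaryGroup
    (Submodule.commute_reflectionMatrix a.prop hWa) (Submodule.commute_reflectionMatrix b.prop hWb)
  rw [(Submodule.eq_bot_or_eq_top_of_reflectionMatrix_eq_smul hc).resolve_left hW0, finrank_top,
    finrank_euclideanSpace_fin] at hWd
  exact (Nat.le_of_dvd (by omega) (orderOf_dvd_of_pow_eq_one hζ)).antisymm hWd ▸
    IsPrimitiveRoot.orderOf ζ

/-- Let `n ≥ 2` and `a, b ∈ SU(n)` (unitary with determinant `1`) with
`a b a⁻¹ b⁻¹ = ζ·I`. If the centralizer of `{a,b}` in `SU(n)` equals the center of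
`SU(n)`, then `ζ` is a primitive `n`-th root of unity. -/
theorem irreducible_pair_commutator_primitive_SU
    (n : ℕ) (hn : 2 ≤ n) (ζ : ℂ)
    (a b : Matrix.unitaryGroup (Fin n) ℂ)
    (ha : Matrix.det (a : Matrix (Fin n) (Fin n) ℂ) = 1)
    (hb : Matrix.det (b : Matrix (Fin n) (Fin n) ℂ) = 1)
    (hab : ((a * b * a⁻¹ * b⁻¹ : Matrix.unitaryGroup (Fin n) ℂ) : Matrix (Fin n) (Fin n) ℂ)
        = ζ • (1 : Matrix (Fin n) (Fin n) ℂ))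
    (hirr : ∀ g : Matrix.unitaryGroup (Fin n) ℂ,
        Matrix.det (g : Matrix (Fin n) (Fin n) ℂ) = 1 →
        g * a = a * g → g * b = b * g →
        ∃ ω : ℂ, ω ^ n = 1 ∧
          (g : Matrix (Fin n) (Fin n) ℂ) = ω • (1 : Matrix (Fin n) (Fin n) ℂ)) :
    IsPrimitiveRoot ζ n :=
  irreducible_pair_commutator_primitive_SU_general n hn ζ a b hab hirr
end

section
/- Let ζ ∈ ℂ be a root of unity of exact order m, let n = h·m, and let a, b ∈ GL(n,ℂ) satisfy a b a⁻¹ b⁻¹ = ζ·I_n. Assume the unital subalgebra of M_n(ℂ) generated by a, a⁻¹, b, b⁻¹ is a semisimple ring. Then there exist g ∈ GL(n,ℂ), invertible diagonal matrices d₁, d₂ ∈ GL(h,ℂ), and matrices P, Q ∈ GL(m,ℂ) with P Q P⁻¹ Q⁻¹ = ζ·I_m, such that g a g⁻¹ = d₁ ⊗ P and g b g⁻¹ = d₂ ⊗ Q, where ⊗ denotes the Kronecker product of matrices. -/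
/-!
If `u v = ζ v u` with `ζ` a primitive `m`-th root of unity, then `v ^ m` commutes with `u`, so every
nonzero subspace invariant under `u` and `v` contains a common eigenvector `x` of `u` and `v ^ m`,
say `u x = α x` and `v ^ m x = μ ^ m x`. The vectors `w k = μ⁻¹ ^ k • v ^ k x`, `k < m`, are
eigenvectors of `u` for the distinct eigenvalues `α ζ ^ k`, and `v` permutes them cyclically with
weight `μ`; so `u` acts on their span as `α • diag(1, ζ, …, ζ ^ (m - 1))` and `v` as `μ •` the cyclic
shift. Their span is stable under the algebra generated by `u`, `v` and their inverses, hence equals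
any simple submodule it lies in. Semisimplicity splits `ℂⁿ` into simple submodules, and the union of
these bases conjugates `(a, b)` to the Kronecker form.
-/

open Module Matrix Kronecker

section
variable {K R : Type*} [CommSemiring K] [Semiring R] [Algebra K R]

theorem mul_pow_eq_smul_pow_mul_s11 {c : K} {x y : R} (h : x * y = c • (y * x)) (k : ℕ) :
    x * y ^ k = c ^ k • (y ^ k * x) := by
  induction k with
  | zero => simp
  | succ k ih =>
    rw [pow_succ, ← mul_assoc, ih, smul_mul_assoc, mul_assoc, h, mul_smul_comm, smul_smul,
      ← mul_assoc, ← pow_succ, ← pow_succ]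

theorem Units.val_commutator_eq_smul_one_iff (c : K) (u v : Rˣ) :
    ((u * v * u⁻¹ * v⁻¹ : Rˣ) : R) = c • 1 ↔ (u : R) * v = c • (v * u) := by
  rw [Units.val_mul, Units.mul_inv_eq_iff_eq_mul, Units.val_mul, Units.mul_inv_eq_iff_eq_mul,
    smul_one_mul, smul_mul_assoc, Units.val_mul]

end

theorem IsPrimitiveRoot.pow_val_add_one {M : Type*} [CommMonoid M] {m : ℕ} [NeZero m] {ζ : M}
    (hζ : IsPrimitiveRoot ζ m) (k : Fin m) : ζ ^ ((k + 1 : Fin m) : ℕ) = ζ ^ ((k : ℕ) + 1) := by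
  have h := pow_mod_orderOf ζ ((k : ℕ) + 1)
  rwa [← hζ.eq_orderOf, ← Nat.add_mod_mod, ← Fin.val_one', ← Fin.val_add] at h

theorem Algebra.isSemisimpleRing_adjoin_image {K R S : Type*} [CommRing K] [Ring R] [Ring S]
    [Algebra K R] [Algebra K S] (e : R ≃ₐ[K] S) {s : Set R} [hs : IsSemisimpleRing (adjoin K s)] :
    IsSemisimpleRing (adjoin K (e '' s)) := by
  rw [← AlgEquiv.coe_toAlgHom, adjoin_image]
  exact (e.subalgebraMap _).toRingEquiv.isSemisimpleRing

namespace Module.End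

theorem pow_mem_invtSubmodule {R M : Type*} [Semiring R] [AddCommMonoid M] [Module R M]
    {f : End R M} {p : Submodule R M} (hp : p ∈ f.invtSubmodule) (k : ℕ) :
    p ∈ (f ^ k).invtSubmodule := by
  rw [mem_invtSubmodule_iff_mapsTo, coe_pow]
  exact Set.MapsTo.iterate hp k

variable {K V : Type*} [Field K] [AddCommGroup V] [Module K V]

theorem HasEigenvector.ne_zero_of_isUnit {f : End K V} {c : K} {x : V} (hx : f.HasEigenvector c x)
    (hf : IsUnit f) : c ≠ 0 := by
  rintro rfl
  exact hx.2 (((isUnit_iff f).mp hf).injective (by rw [hx.apply_eq_smul, zero_smul, map_zero]))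

theorem exists_hasEigenvector_of_mem_invtSubmodule [IsAlgClosed K] [FiniteDimensional K V]
    {f : End K V} {p : Submodule K V} (hp : p ∈ f.invtSubmodule) (hp0 : p ≠ ⊥) :
    ∃ c, ∃ x ∈ p, f.HasEigenvector c x := by
  have : Nontrivial p := Submodule.nontrivial_iff_ne_bot.mpr hp0
  obtain ⟨c, hc⟩ := exists_eigenvalue (f.restrict hp)
  obtain ⟨x, hx⟩ := hc.exists_hasEigenvector
  exact ⟨c, x, x.2, mem_eigenspace_iff.mpr (congrArg Subtype.val hx.apply_eq_smul),
    by simpa using hx.2⟩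

theorem mem_invtSubmodule_inv [FiniteDimensional K V] (f : (End K V)ˣ) {p : Submodule K V}
    (hp : p ∈ (f : End K V).invtSubmodule) : p ∈ (↑f⁻¹ : End K V).invtSubmodule := by
  have hinj : Function.Injective ((f : End K V).restrict hp) := fun x y hxy =>
    Subtype.ext (((isUnit_iff _).mp f.isUnit).injective (congrArg Subtype.val hxy))
  intro y hy
  obtain ⟨x, hx⟩ := LinearMap.injective_iff_surjective.mp hinj ⟨y, hy⟩
  have hfx : (f : End K V) x = y := congrArg Subtype.val hx
  simp [← hfx, ← mul_apply]

theorem mem_invtSubmodule_of_mem_adjoin {s : Set (End K V)} {p : Submodule K V}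
    (hs : ∀ f ∈ s, p ∈ f.invtSubmodule) {f : End K V} (hf : f ∈ Algebra.adjoin K s) :
    p ∈ f.invtSubmodule := by
  induction hf using Algebra.adjoin_induction with
  | mem f hf => exact hs f hf
  | algebraMap c =>
    rw [Algebra.algebraMap_eq_smul_one]
    exact invtSubmodule_le_invtSubmodule_smul _ c (by simp)
  | add f g _ _ hf hg => exact invtSubmodule_inf_invtSubmodule_le_invtSubmodule_add f g ⟨hf, hg⟩
  | mul f g _ _ hf hg => exact invtSubmodule.comp f hf hg

end Module.End

theorem Submodule.restrictScalars_span_eq_of_forall_mem_invtSubmodule {K V : Type*} [Field K]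
    [AddCommGroup V] [Module K V] {A : Subalgebra K (End K V)} {s : Set V}
    (h : ∀ f ∈ A, span K s ∈ f.invtSubmodule) : (span A s).restrictScalars K = span K s := by
  refine le_antisymm (fun x hx => ?_) (span_le_restrictScalars K A s)
  induction hx using span_induction with
  | mem x hx => exact subset_span hx
  | zero => exact zero_mem _
  | add x y _ _ hx hy => exact add_mem hx hy
  | smul f x _ hx => exact h f f.2 hx

section
variable {K M ι : Type*} [CommSemiring K] [AddCommMonoid M] [Module K M] [Fintype ι]
  [DecidableEq ι]

theorem LinearMap.toMatrix_reindex {κ : Type*} [Fintype κ] [DecidableEq κ] (b : Basis ι K M)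
    (σ : ι ≃ κ) (f : M →ₗ[K] M) :
    toMatrix (b.reindex σ) (b.reindex σ) f = reindex σ σ (toMatrix b b f) := by
  ext i j
  simp [toMatrix_apply]

theorem LinearMap.toMatrix_apply_of_apply_eq_smul (b : Basis ι K M) {f : M →ₗ[K] M} {c : ι → K}
    {τ : ι → ι} (hf : ∀ j, f (b j) = c j • b (τ j)) (i j : ι) :
    toMatrix b b f i j = if τ j = i then c j else 0 := by
  simp [toMatrix_apply, hf, Finsupp.single_apply]

end

theorem Module.Basis.exists_conj_eq_toMatrix {K n : Type*} [CommRing K] [Fintype n] [DecidableEq n]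
    (b : Basis n K (n → K)) : ∃ g : GL n K, ∀ a : GL n K,
      ((g * a * g⁻¹ : GL n K) : Matrix n n K) = LinearMap.toMatrix b b (toLin' a) :=
  ⟨⟨b.toMatrix (Pi.basisFun K n), (Pi.basisFun K n).toMatrix b, b.toMatrix_mul_toMatrix_flip _,
    (Pi.basisFun K n).toMatrix_mul_toMatrix_flip _⟩, fun a => by
      rw [← basis_toMatrix_mul_linearMap_toMatrix_mul_basis_toMatrix b (Pi.basisFun K n) b
        (Pi.basisFun K n), LinearMap.toMatrix_eq_toMatrix', LinearMap.toMatrix'_toLin']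
      rfl⟩

namespace WeylPair

section Endomorphisms

variable {V : Type*} [AddCommGroup V] [Module ℂ V] [FiniteDimensional ℂ V] {m : ℕ} {ζ : ℂ}
  (u v : (End ℂ V)ˣ)

abbrev generatedAlgebra : Subalgebra ℂ (End ℂ V) :=
  Algebra.adjoin ℂ {(u : End ℂ V), ↑u⁻¹, ↑v, ↑v⁻¹}

theorem exists_common_eigenvector (huv : (u : End ℂ V) * v = ζ • ((v : End ℂ V) * u))
    (hζ : ζ ^ m = 1) {W : Submodule ℂ V} (hW : W ≠ ⊥)
    (hWu : W ∈ (u : End ℂ V).invtSubmodule) (hWv : W ∈ (v : End ℂ V).invtSubmodule) :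
    ∃ α β, ∃ x ∈ W, (u : End ℂ V).HasEigenvector α x ∧ ((v : End ℂ V) ^ m).HasEigenvector β x := by
  obtain ⟨α, x₀, hx₀W, hx₀⟩ := End.exists_hasEigenvector_of_mem_invtSubmodule hWu hW
  have hcomm : Commute (u : End ℂ V) (v ^ m) := by
    rw [Commute, SemiconjBy, mul_pow_eq_smul_pow_mul_s11 huv, hζ, one_smul]
  have hE : W ⊓ (u : End ℂ V).eigenspace α ∈ ((v : End ℂ V) ^ m).invtSubmodule :=
    End.invtSubmodule.inf_mem (End.pow_mem_invtSubmodule hWv m)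
      (End.mapsTo_genEigenspace_of_comm hcomm α 1)
  have hE0 : W ⊓ (u : End ℂ V).eigenspace α ≠ ⊥ :=
    (Submodule.ne_bot_iff _).mpr ⟨x₀, ⟨hx₀W, hx₀.1⟩, hx₀.2⟩
  obtain ⟨β, x, ⟨hxW, hxu⟩, hx⟩ := End.exists_hasEigenvector_of_mem_invtSubmodule hE hE0
  exact ⟨α, β, x, hxW, ⟨hxu, hx.2⟩, hx⟩

theorem exists_clockShift_family [NeZero m] (hζ : IsPrimitiveRoot ζ m)
    (huv : (u : End ℂ V) * v = ζ • ((v : End ℂ V) * u)) {W : Submodule ℂ V} (hW : W ≠ ⊥)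
    (hWu : W ∈ (u : End ℂ V).invtSubmodule) (hWv : W ∈ (v : End ℂ V).invtSubmodule) :
    ∃ (α μ : ℂˣ) (w : Fin m → V), (∀ k, w k ∈ W) ∧ LinearIndependent ℂ w ∧
      ∀ k, (u : End ℂ V) (w k) = (α * ζ ^ (k : ℕ) : ℂ) • w k ∧
        (v : End ℂ V) (w k) = (μ : ℂ) • w (k + 1) := by
  obtain ⟨α, β, x, hxW, hxu, hxv⟩ := exists_common_eigenvector u v huv hζ.pow_eq_one hW hWu hWv
  have hα : α ≠ 0 := hxu.ne_zero_of_isUnit u.isUnit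
  obtain ⟨μ, rfl⟩ := IsAlgClosed.exists_pow_nat_eq β (Nat.pos_of_neZero m)
  have hμ : μ ≠ 0 := fun h => hxv.ne_zero_of_isUnit (v.isUnit.pow m) (by simp [h, NeZero.ne m])
  -- the `v`-orbit of `x`, rescaled so that `v` shifts it with constant weight `μ`
  set w : ℕ → V := fun k => μ⁻¹ ^ k • ((v : End ℂ V) ^ k) x with hw
  have hwv (k : ℕ) : (v : End ℂ V) (w k) = μ • w (k + 1) := by
    simp only [hw, map_smul, smul_smul, pow_succ', End.mul_apply]
    rw [mul_inv_cancel_left₀ hμ]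
  have hwper : Function.Periodic w m := by
    intro k
    simp only [hw, pow_add, End.mul_apply, hxv.apply_eq_smul, map_smul, smul_smul]
    rw [mul_assoc, ← mul_pow, inv_mul_cancel₀ hμ, one_pow, mul_one]
  have hwu (k : ℕ) : (u : End ℂ V).HasEigenvector (α * ζ ^ k) (w k) := by
    refine ⟨End.mem_eigenspace_iff.mpr ?_, smul_ne_zero (pow_ne_zero _ (inv_ne_zero hμ)) ?_⟩
    · simp only [hw, map_smul]
      rw [← End.mul_apply, mul_pow_eq_smul_pow_mul_s11 huv k, LinearMap.smul_apply, End.mul_apply,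
        hxu.apply_eq_smul, map_smul, smul_smul, smul_smul, smul_smul]
      ring_nf
    · exact fun h => hxu.2 (((End.isUnit_iff _).mp (v.isUnit.pow k)).injective (by simpa using h))
  refine ⟨Units.mk0 α hα, Units.mk0 μ hμ, fun k => w k, fun k => ?_, ?_, fun k => ⟨?_, ?_⟩⟩
  · exact W.smul_mem _ (End.pow_mem_invtSubmodule hWv k hxW)
  · exact End.eigenvectors_linearIndependent' (u : End ℂ V) (fun k : Fin m => α * ζ ^ (k : ℕ))
      (fun k l hkl => Fin.ext (hζ.pow_inj k.2 l.2 (mul_left_cancel₀ hα hkl))) _ (fun k => hwu k)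
  · exact (hwu k).apply_eq_smul
  · show (v : End ℂ V) (w k) = μ • w ((k + 1 : Fin m) : ℕ)
    rw [hwv, Fin.val_add, Fin.val_one', Nat.add_mod_mod, hwper.map_mod_nat]

theorem exists_clockShift_basis_of_isSimpleModule [NeZero m] (hζ : IsPrimitiveRoot ζ m)
    (huv : (u : End ℂ V) * v = ζ • ((v : End ℂ V) * u)) (S : Submodule (generatedAlgebra u v) V)
    [IsSimpleModule (generatedAlgebra u v) S] :
    ∃ (α μ : ℂˣ) (w : Fin m → V), LinearIndependent ℂ w ∧
      Submodule.span ℂ (Set.range w) = S.restrictScalars ℂ ∧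
      ∀ k, (u : End ℂ V) (w k) = (α * ζ ^ (k : ℕ) : ℂ) • w k ∧
        (v : End ℂ V) (w k) = (μ : ℂ) • w (k + 1) := by
  have hS (f) (hf : f ∈ generatedAlgebra u v) : S.restrictScalars ℂ ∈ f.invtSubmodule :=
    fun x hx => S.smul_mem ⟨f, hf⟩ hx
  have hS0 : S.restrictScalars ℂ ≠ ⊥ := by
    rw [Ne, Submodule.restrictScalars_eq_bot_iff, ← Ne, ← Submodule.nontrivial_iff_ne_bot]
    exact IsSimpleModule.nontrivial (generatedAlgebra u v) S
  obtain ⟨α, μ, w, hwS, hli, hw⟩ := exists_clockShift_family u v hζ huv hS0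
    (hS _ (Algebra.subset_adjoin (by simp))) (hS _ (Algebra.subset_adjoin (by simp)))
  have hspan_u : Submodule.span ℂ (Set.range w) ∈ (u : End ℂ V).invtSubmodule :=
    Submodule.span_le.mpr <| Set.range_subset_iff.mpr fun k => by
      rw [SetLike.mem_coe, Submodule.mem_comap, (hw k).1]
      exact Submodule.smul_mem _ _ (Submodule.subset_span (Set.mem_range_self k))
  have hspan_v : Submodule.span ℂ (Set.range w) ∈ (v : End ℂ V).invtSubmodule :=
    Submodule.span_le.mpr <| Set.range_subset_iff.mpr fun k => by
      rw [SetLike.mem_coe, Submodule.mem_comap, (hw k).2]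
      exact Submodule.smul_mem _ _ (Submodule.subset_span (Set.mem_range_self (k + 1)))
  have hspan (f) (hf : f ∈ generatedAlgebra u v) :
      Submodule.span ℂ (Set.range w) ∈ f.invtSubmodule := by
    refine End.mem_invtSubmodule_of_mem_adjoin ?_ hf
    rintro f (rfl | rfl | rfl | rfl)
    exacts [hspan_u, End.mem_invtSubmodule_inv u hspan_u, hspan_v,
      End.mem_invtSubmodule_inv v hspan_v]
  have hspanS : Submodule.span (generatedAlgebra u v) (Set.range w) = S := by
    refine ((isSimpleModule_iff_isAtom.mp ‹_›).le_iff.mp ?_).resolve_left ?_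
    · exact Submodule.span_le.mpr (Set.range_subset_iff.mpr hwS)
    · exact Submodule.span_eq_bot.not.mpr fun h => hli.ne_zero 0 (h _ ⟨0, rfl⟩)
  refine ⟨α, μ, w, hli, ?_, hw⟩
  rw [← hspanS, Submodule.restrictScalars_span_eq_of_forall_mem_invtSubmodule hspan]

theorem exists_clockShift_basis [NeZero m] (hζ : IsPrimitiveRoot ζ m)
    (huv : (u : End ℂ V) * v = ζ • ((v : End ℂ V) * u))
    [IsSemisimpleModule (generatedAlgebra u v) V] :
    ∃ (r : ℕ) (e : Basis (Fin r × Fin m) ℂ V) (α μ : Fin r → ℂˣ), ∀ i k,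
      (u : End ℂ V) (e (i, k)) = (α i * ζ ^ (k : ℕ) : ℂ) • e (i, k) ∧
      (v : End ℂ V) (e (i, k)) = (μ i : ℂ) • e (i, k + 1) := by
  classical
  obtain ⟨s, hind, htop, hsimple⟩ :=
    IsSemisimpleModule.exists_sSupIndep_sSup_simples_eq_top (generatedAlgebra u v) V
  have hpiece (S : s) := haveI := hsimple S S.2
    exists_clockShift_basis_of_isSimpleModule u v hζ huv (S : Submodule (generatedAlgebra u v) V)
  choose α μ w hli hspan hw using hpiece
  -- internality only concerns the underlying additive subgroups, so it holds over `ℂ` as well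
  have hint : DirectSum.IsInternal fun S : s =>
      (S : Submodule (generatedAlgebra u v) V).restrictScalars ℂ :=
    DirectSum.isInternal_submodule_of_iSupIndep_of_iSup_eq_top (A := fun S : s => S.1)
      ((sSupIndep_iff s).mp hind) (by rw [← sSup_eq_iSup', htop])
  let b : Basis (Σ _ : s, Fin m) ℂ V :=
    hint.collectedBasis fun S => (Basis.span (hli S)).map (LinearEquiv.ofEq _ _ (hspan S))
  have hb (S : s) (k : Fin m) : b ⟨S, k⟩ = w S k := by simp [b]
  have : Finite s := by
    have := Module.Finite.finite_basis b
    exact Finite.of_injective (fun S : s => (⟨S, 0⟩ : Σ _ : s, Fin m)) fun S T h => by simpa using h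
  let σ := Finite.equivFin s
  let τ := (Equiv.sigmaEquivProd s (Fin m)).trans (σ.prodCongr (.refl _))
  have hτ (i k) : τ.symm (i, k) = ⟨σ.symm i, k⟩ := rfl
  refine ⟨Nat.card s, b.reindex τ, α ∘ σ.symm, μ ∘ σ.symm, fun i k => ?_⟩
  simp only [Basis.reindex_apply, hτ, hb, Function.comp_apply]
  exact hw (σ.symm i) k

end Endomorphisms

variable {m : ℕ} {ζ : ℂ}

theorem exists_clockShift_basis_of_GL {n : Type*} [Fintype n] [DecidableEq n] [NeZero m]
    (hζ : IsPrimitiveRoot ζ m) (a b : GL n ℂ)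
    (hab : ((a * b * a⁻¹ * b⁻¹ : GL n ℂ) : Matrix n n ℂ) = ζ • 1)
    (hs : IsSemisimpleRing (Algebra.adjoin ℂ {(a : Matrix n n ℂ), ↑a⁻¹, ↑b, ↑b⁻¹})) :
    ∃ (r : ℕ) (e : Basis (Fin r × Fin m) ℂ (n → ℂ)) (α μ : Fin r → ℂˣ), ∀ i k,
      toLin' (a : Matrix n n ℂ) (e (i, k)) = (α i * ζ ^ (k : ℕ) : ℂ) • e (i, k) ∧
      toLin' (b : Matrix n n ℂ) (e (i, k)) = (μ i : ℂ) • e (i, k + 1) := by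
  let φ : Matrix n n ℂ ≃ₐ[ℂ] End ℂ (n → ℂ) := toLinAlgEquiv'
  set u : (End ℂ (n → ℂ))ˣ := Units.map (φ : _ →* _) a with hu
  set v : (End ℂ (n → ℂ))ˣ := Units.map (φ : _ →* _) b with hv
  have huv : (u : End ℂ (n → ℂ)) * (v : End ℂ (n → ℂ)) =
      ζ • ((v : End ℂ (n → ℂ)) * (u : End ℂ (n → ℂ))) := by
    simp [hu, hv, ← map_mul, (Units.val_commutator_eq_smul_one_iff ζ a b).mp hab]
  have : IsSemisimpleModule (generatedAlgebra u v) (n → ℂ) := by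
    have hgen : ⇑φ '' {(a : Matrix n n ℂ), ↑a⁻¹, ↑b, ↑b⁻¹} =
        {(u : End ℂ (n → ℂ)), ↑u⁻¹, ↑v, ↑v⁻¹} := by
      simp [Set.image_insert_eq, hu, hv]
    have := Algebra.isSemisimpleRing_adjoin_image φ (hs := hs)
    rw [hgen] at this
    infer_instance
  exact exists_clockShift_basis u v hζ huv

def clockMatrix (ζ : ℂ) (m : ℕ) : Matrix (Fin m) (Fin m) ℂ := diagonal fun k => ζ ^ (k : ℕ)

def shiftMatrix (m : ℕ) [NeZero m] : Matrix (Fin m) (Fin m) ℂ :=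
  Equiv.Perm.permMatrix ℂ (Equiv.subRight 1 : Equiv.Perm (Fin m))

theorem shiftMatrix_apply [NeZero m] (k l : Fin m) :
    shiftMatrix m k l = if l + 1 = k then 1 else 0 := by
  simp only [shiftMatrix, Equiv.Perm.permMatrix, PEquiv.toMatrix_apply, Equiv.toPEquiv_apply,
    Option.mem_def, Option.some_inj, Equiv.subRight_apply, sub_eq_iff_eq_add, eq_comm (a := k)]

theorem det_clockMatrix_ne_zero [NeZero m] (hζ : IsPrimitiveRoot ζ m) :
    (clockMatrix ζ m).det ≠ 0 := by
  simp [clockMatrix, Finset.prod_ne_zero_iff, hζ.ne_zero (NeZero.ne m)]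

theorem det_shiftMatrix_ne_zero [NeZero m] : (shiftMatrix m).det ≠ 0 := by
  simp [shiftMatrix, det_permutation]

theorem clockMatrix_mul_shiftMatrix [NeZero m] (hζ : IsPrimitiveRoot ζ m) :
    clockMatrix ζ m * shiftMatrix m = ζ • (shiftMatrix m * clockMatrix ζ m) := by
  ext k l
  rw [clockMatrix, diagonal_mul, Matrix.smul_apply, mul_diagonal, shiftMatrix_apply]
  split_ifs with h
  · simp [← h, hζ.pow_val_add_one, pow_succ']
  · simp

section
variable {ι M : Type*} [Fintype ι] [DecidableEq ι] [AddCommMonoid M] [Module ℂ M]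

theorem toMatrix_eq_diagonal_kronecker_clockMatrix (e : Basis (ι × Fin m) ℂ M)
    {f : M →ₗ[ℂ] M} {α : ι → ℂ} (hf : ∀ i k, f (e (i, k)) = (α i * ζ ^ (k : ℕ)) • e (i, k)) :
    LinearMap.toMatrix e e f = diagonal α ⊗ₖ clockMatrix ζ m := by
  ext ⟨i, k⟩ ⟨j, l⟩
  rw [LinearMap.toMatrix_apply_of_apply_eq_smul e (τ := id) fun p => hf p.1 p.2,
    kroneckerMap_apply, clockMatrix, diagonal_apply, diagonal_apply]
  rcases eq_or_ne i j with rfl | hij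
  · by_cases hkl : k = l <;> simp [hkl, eq_comm]
  · simp [hij, hij.symm]

theorem toMatrix_eq_diagonal_kronecker_shiftMatrix [NeZero m] (e : Basis (ι × Fin m) ℂ M)
    {f : M →ₗ[ℂ] M} {μ : ι → ℂ} (hf : ∀ i k, f (e (i, k)) = μ i • e (i, k + 1)) :
    LinearMap.toMatrix e e f = diagonal μ ⊗ₖ shiftMatrix m := by
  ext ⟨i, k⟩ ⟨j, l⟩
  rw [LinearMap.toMatrix_apply_of_apply_eq_smul e (τ := fun p => (p.1, p.2 + 1))
    fun p => hf p.1 p.2, kroneckerMap_apply, shiftMatrix_apply, diagonal_apply]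
  rcases eq_or_ne i j with rfl | hij
  · by_cases hkl : l + 1 = k <;> simp [hkl]
  · simp [hij, hij.symm]

end

end WeylPair

open WeylPair in
/-- Every reductive `c`-pair in `GL(n,ℂ)` (with `c = ζ·I`, `ζ` of exact order `m`,
`n = h·m`) is conjugate to a pair of Kronecker products `(d₁ ⊗ P, d₂ ⊗ Q)` with
`d₁, d₂` invertible diagonal `h×h` matrices and `(P,Q)` a pair in `GL(m,ℂ)` with
commutator `ζ·Iₘ`. -/
theorem reductive_pair_conjugate_to_kronecker_GL
    (m h : ℕ) (ζ : ℂ) (hζ : IsPrimitiveRoot ζ m)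
    (a b : GL (Fin (h * m)) ℂ)
    (hab : ((a * b * a⁻¹ * b⁻¹ : GL (Fin (h * m)) ℂ) :
        Matrix (Fin (h * m)) (Fin (h * m)) ℂ)
        = ζ • (1 : Matrix (Fin (h * m)) (Fin (h * m)) ℂ))
    (hsemisimple : IsSemisimpleRing
      (Algebra.adjoin ℂ ({(a : Matrix (Fin (h * m)) (Fin (h * m)) ℂ),
        ((a⁻¹ : GL (Fin (h * m)) ℂ) : Matrix (Fin (h * m)) (Fin (h * m)) ℂ),
        (b : Matrix (Fin (h * m)) (Fin (h * m)) ℂ),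
        ((b⁻¹ : GL (Fin (h * m)) ℂ) : Matrix (Fin (h * m)) (Fin (h * m)) ℂ)} :
        Set (Matrix (Fin (h * m)) (Fin (h * m)) ℂ)))) :
    ∃ (g : GL (Fin (h * m)) ℂ)
      (d₁ d₂ : Matrix (Fin h) (Fin h) ℂ)
      (P Q : GL (Fin m) ℂ),
      IsUnit d₁ ∧ IsUnit d₂ ∧ d₁.IsDiag ∧ d₂.IsDiag ∧
      ((P * Q * P⁻¹ * Q⁻¹ : GL (Fin m) ℂ) : Matrix (Fin m) (Fin m) ℂ)
        = ζ • (1 : Matrix (Fin m) (Fin m) ℂ) ∧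
      ((g * a * g⁻¹ : GL (Fin (h * m)) ℂ) : Matrix (Fin (h * m)) (Fin (h * m)) ℂ)
        = Matrix.reindex finProdFinEquiv finProdFinEquiv
            (d₁ ⊗ₖ (P : Matrix (Fin m) (Fin m) ℂ)) ∧
      ((g * b * g⁻¹ : GL (Fin (h * m)) ℂ) : Matrix (Fin (h * m)) (Fin (h * m)) ℂ)
        = Matrix.reindex finProdFinEquiv finProdFinEquiv
            (d₂ ⊗ₖ (Q : Matrix (Fin m) (Fin m) ℂ)) := by
  rcases Nat.eq_zero_or_pos m with rfl | hm
  · exact ⟨1, 1, 1, 1, 1, isUnit_one, isUnit_one, isDiag_one, isDiag_one,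
      Matrix.ext fun i => i.elim0, Matrix.ext fun i => i.elim0, Matrix.ext fun i => i.elim0⟩
  have : NeZero m := ⟨hm.ne'⟩
  obtain ⟨r, e, α, μ, he⟩ := exists_clockShift_basis_of_GL hζ a b hab hsemisimple
  obtain rfl : r = h := by
    have := Module.finrank_eq_card_basis e
    simp only [Module.finrank_fin_fun, Fintype.card_prod, Fintype.card_fin] at this
    exact (Nat.eq_of_mul_eq_mul_right hm this).symm
  obtain ⟨g, hg⟩ := (e.reindex finProdFinEquiv).exists_conj_eq_toMatrix
  refine ⟨g, diagonal (α ·), diagonal (μ ·), .mkOfDetNeZero _ (det_clockMatrix_ne_zero hζ),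
    .mkOfDetNeZero _ det_shiftMatrix_ne_zero,
    isUnit_diagonal.mpr (Pi.isUnit_iff.mpr fun i => (α i).isUnit),
    isUnit_diagonal.mpr (Pi.isUnit_iff.mpr fun i => (μ i).isUnit), isDiag_diagonal _,
    isDiag_diagonal _,
    (Units.val_commutator_eq_smul_one_iff ζ _ _).mpr (clockMatrix_mul_shiftMatrix hζ), ?_, ?_⟩
  · rw [hg, LinearMap.toMatrix_reindex, GeneralLinearGroup.val_mkOfDetNeZero,
      toMatrix_eq_diagonal_kronecker_clockMatrix e fun i k => (he i k).1]
  · rw [hg, LinearMap.toMatrix_reindex, GeneralLinearGroup.val_mkOfDetNeZero,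
      toMatrix_eq_diagonal_kronecker_shiftMatrix e fun i k => (he i k).2]
end
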